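/- If the incidence matrix row sums satisfy max{H^{(1)}_v : v} = M < ∞ and μ is the tail-invariant measure given by the positive eigenpair (ξ, λ), then the Radon–Nikodym derivative of μ∘σ^{-1} with respect to μ satisfies λ^{-1} ≤ d(μ∘σ^{-1})/dμ(x) ≤ M λ^{-1} for μ-a.e. x; in particular μ∘σ^{-1} and μ are mutually absolutely continuous. -/

import Mathlib

open MeasureTheory ENNReal Filter Topology

variable {V E : Type}

/-- Path space of a stationary generalized Bratteli diagram with edge set `E`,
source map `s` and range map `r`. -/
abbrev PathSp (s r : E → V) : Type _ := {x : ℕ → E // ∀ n, r (x n) = s (x (n + 1))}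

/-- The left shift (coding map) on the path space. -/
def shiftMap (s r : E → V) (x : PathSp s r) : PathSp s r :=
  ⟨fun n => x.1 (n + 1), fun n => x.2 (n + 1)⟩

/-- Prepending an edge `e` to a path `y` whose initial vertex is `r e` (the map `τ_e`). -/
def consPath (s r : E → V) (e : E) (y : PathSp s r) (h : r e = s (y.1 0)) : PathSp s r :=
  ⟨fun n => Nat.casesOn n e fun k => y.1 k, by
    intro n
    cases n with
    | zero => exact h
    | succ k => exact y.2 k⟩

/-- Compatibility of a finite sequence of edges: it forms a finite path. -/
def compat (s r : E → V) {n : ℕ} (f : Fin (n + 1) → E) : Prop :=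
  ∀ i : Fin n, r (f i.castSucc) = s (f i.succ)

/-- The cylinder set of the finite path `f`. -/
def cyl (s r : E → V) {n : ℕ} (f : Fin (n + 1) → E) : Set (PathSp s r) :=
  {x | ∀ i : Fin (n + 1), x.1 i.1 = f i}

section Aux

variable [Countable E] [MeasurableSpace E] [DiscreteMeasurableSpace E]

lemma measurable_coord (s r : E → V) (n : ℕ) :
    Measurable fun x : PathSp s r => x.1 n :=
  (measurable_pi_apply n).comp measurable_subtype_coe

lemma cyl_measurableSet (s r : E → V) {n : ℕ} (f : Fin (n + 1) → E) :
    MeasurableSet (cyl s r f) := by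
  have h : cyl s r f = ⋂ i : Fin (n + 1), (fun x : PathSp s r => x.1 i.1) ⁻¹' {f i} := by
    ext x; simp [cyl]
  rw [h]
  exact MeasurableSet.iInter fun i => measurable_coord s r i.1 (measurableSet_singleton _)

lemma compat_of_mem_cyl {s r : E → V} {n : ℕ} {f : Fin (n + 1) → E} {x : PathSp s r}
    (hx : x ∈ cyl s r f) : compat s r f := by
  intro i
  have h1 := hx i.castSucc
  have h2 := hx i.succ
  have h3 := x.2 i.1
  rw [Fin.coe_castSucc] at h1
  rw [Fin.val_succ] at h2
  rw [← h1, ← h2]; exact h3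

/-- The collection of cylinder sets. -/
def cylSet (s r : E → V) : Set (Set (PathSp s r)) :=
  {S | ∃ (n : ℕ) (f : Fin (n + 1) → E), S = cyl s r f}

lemma gen_eq (s r : E → V) :
    (inferInstance : MeasurableSpace (PathSp s r)) =
      MeasurableSpace.generateFrom (cylSet s r) := by
  refine le_antisymm ?_ (MeasurableSpace.generateFrom_le ?_)
  · have hval : @Measurable (PathSp s r) (ℕ → E)
        (MeasurableSpace.generateFrom (cylSet s r)) _ Subtype.val := by
      refine (@measurable_pi_iff (PathSp s r) ℕ (fun _ => E) (MeasurableSpace.generateFrom (cylSet s r)) _ Subtype.val).mpr ?_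
      intro n
      refine @measurable_to_countable' E (PathSp s r) _ _
        (MeasurableSpace.generateFrom (cylSet s r)) (fun x => x.1 n) ?_
      intro e
      have h : (fun x : PathSp s r => x.1 n) ⁻¹' {e}
          = ⋃ f ∈ {f : Fin (n + 1) → E | f (Fin.last n) = e}, cyl s r f := by
        ext x
        simp only [Set.mem_preimage, Set.mem_singleton_iff, Set.mem_iUnion, Set.mem_setOf_eq]
        constructor
        · intro hx
          exact ⟨fun i => x.1 i.1, hx, fun i => rfl⟩
        · rintro ⟨f, hf, hxf⟩
          exact (hxf (Fin.last n)).trans hf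
      rw [h]
      exact MeasurableSet.biUnion (Set.to_countable _)
        fun f _ => MeasurableSpace.measurableSet_generateFrom ⟨n, f, rfl⟩
    exact measurable_iff_comap_le.mp hval
  · rintro S ⟨n, f, rfl⟩
    exact cyl_measurableSet s r f

lemma isPiSystem_cylSet (s r : E → V) : IsPiSystem (cylSet s r) := by
  rintro S ⟨n, f, rfl⟩ T ⟨m, g, rfl⟩ hne
  obtain ⟨x, hxf, hxg⟩ := hne
  refine ⟨max n m, fun i => x.1 i.1, ?_⟩
  ext y
  simp only [Set.mem_inter_iff, cyl, Set.mem_setOf_eq]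
  constructor
  · rintro ⟨h1, h2⟩ i
    rcases le_or_gt i.1 n with h | h
    · exact (h1 ⟨i.1, by omega⟩).trans (hxf ⟨i.1, by omega⟩).symm
    · have h' : i.1 ≤ m := by have := i.2; omega
      exact (h2 ⟨i.1, by omega⟩).trans (hxg ⟨i.1, by omega⟩).symm
  · intro h
    constructor
    · intro i
      have h0 := h ⟨i.1, by omega⟩
      exact h0.trans (hxf i)
    · intro i
      have h0 := h ⟨i.1, by omega⟩
      exact h0.trans (hxg i)

lemma measurable_shiftMap (s r : E → V) : Measurable (shiftMap s r) := by
  apply Measurable.subtype_mk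
  rw [measurable_pi_iff]
  intro n
  exact measurable_coord s r (n + 1)

lemma measurable_start (s r : E → V) (v : V) :
    MeasurableSet {x : PathSp s r | s (x.1 0) = v} :=
  measurable_coord s r 0 (MeasurableSet.of_discrete (s := {e : E | s e = v}))

end Aux

/-- if the row sums satisfy `H⁽¹⁾_v ≤ M < ∞` for all `v`, then the
Radon–Nikodym derivative of `μ ∘ σ⁻¹` with respect to `μ` lies between `λ⁻¹` and `M λ⁻¹`
(expressed on measurable sets: `λ⁻¹ μ(S) ≤ μ(σ⁻¹ S) ≤ M λ⁻¹ μ(S)`); in particular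
`μ ∘ σ⁻¹` and `μ` are mutually absolutely continuous. -/
theorem rnDeriv_bounds
    [Countable E] [Countable V] [MeasurableSpace E] [DiscreteMeasurableSpace E]
    (s r : E → V) (xi : V → ℝ≥0∞) (lam : ℝ≥0∞)
    (hxi : ∀ v, 0 < xi v) (hxi' : ∀ v, xi v ≠ ∞)
    (hlam : 0 < lam) (hlam' : lam ≠ ∞)
    (heig : ∀ w : V, ∑' e : {e : E // s e = w}, xi (r e.1) = lam * xi w)
    (hr : Function.Surjective r)
    (M : ℕ) (hfin : ∀ w : V, {e : E | r e = w}.Finite)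
    (hM : ∀ w : V, {e : E | r e = w}.ncard ≤ M)
    (μ : Measure (PathSp s r))
    (hμ0 : ∀ v : V, μ {x : PathSp s r | s (x.1 0) = v} = xi v)
    (hμ : ∀ (n : ℕ) (f : Fin (n + 1) → E), compat s r f →
        μ (cyl s r f) = xi (r (f (Fin.last n))) / lam ^ (n + 1)) :
    (∀ S : Set (PathSp s r), MeasurableSet S →
        lam⁻¹ * μ S ≤ μ (shiftMap s r ⁻¹' S) ∧
        μ (shiftMap s r ⁻¹' S) ≤ (M : ℝ≥0∞) * lam⁻¹ * μ S)
    ∧ ∀ S : Set (PathSp s r), MeasurableSet S →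
        (μ S = 0 ↔ μ (shiftMap s r ⁻¹' S) = 0) := by
  classical
  have hσ : Measurable (shiftMap s r) := measurable_shiftMap s r
  -- one-edge cylinders
  have hCe : ∀ e : E, μ (cyl s r (fun _ : Fin 1 => e)) = xi (r e) / lam := by
    intro e
    have h := hμ 0 (fun _ => e) (fun i => i.elim0)
    simpa using h
  -- Key: μ(σ⁻¹ S ∩ {x₀ = e}) = λ⁻¹ μ(S ∩ {start = r e})
  have key : ∀ (e : E) (S : Set (PathSp s r)), MeasurableSet S →
      μ (shiftMap s r ⁻¹' S ∩ cyl s r (fun _ : Fin 1 => e))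
        = lam⁻¹ * μ (S ∩ {x : PathSp s r | s (x.1 0) = r e}) := by
    intro e
    set ν : Measure (PathSp s r) :=
      (μ.restrict (cyl s r (fun _ : Fin 1 => e))).map (shiftMap s r) with hν
    set ρ : Measure (PathSp s r) :=
      lam⁻¹ • μ.restrict {x : PathSp s r | s (x.1 0) = r e} with hρ
    have hνS : ∀ S : Set (PathSp s r), MeasurableSet S →
        ν S = μ (shiftMap s r ⁻¹' S ∩ cyl s r (fun _ : Fin 1 => e)) := by
      intro S hS
      rw [hν, Measure.map_apply hσ hS, Measure.restrict_apply (hσ hS)]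
    have hρS : ∀ S : Set (PathSp s r),
        ρ S = lam⁻¹ * μ (S ∩ {x : PathSp s r | s (x.1 0) = r e}) := by
      intro S
      rw [hρ, Measure.smul_apply, Measure.restrict_apply' (measurable_start s r (r e)),
        smul_eq_mul]
    -- the cons identity
    have hcons : ∀ {n : ℕ} (f : Fin (n + 1) → E),
        shiftMap s r ⁻¹' cyl s r f ∩ cyl s r (fun _ : Fin 1 => e)
          = cyl s r (Fin.cons e f) := by
      intro n f
      ext x
      simp only [Set.mem_inter_iff, Set.mem_preimage, cyl, Set.mem_setOf_eq, shiftMap]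
      constructor
      · rintro ⟨h1, h2⟩ j
        refine Fin.cases ?_ ?_ j
        · simpa using h2 0
        · intro i
          simpa [Fin.cons_succ, Fin.val_succ] using h1 i
      · intro h
        refine ⟨fun i => ?_, fun i => ?_⟩
        · simpa [Fin.cons_succ, Fin.val_succ] using h i.succ
        · have hi : i = 0 := Fin.fin_one_eq_zero i
          subst hi
          simpa using h 0
    have hfinν : IsFiniteMeasure ν := by
      constructor
      rw [hνS Set.univ MeasurableSet.univ]
      simp only [Set.preimage_univ, Set.univ_inter]
      rw [hCe e]
      exact ENNReal.div_lt_top (hxi' _) hlam.ne'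
    have hνρ : ν = ρ := by
      refine ext_of_generate_finite (cylSet s r) (gen_eq s r) (isPiSystem_cylSet s r) ?_ ?_
      · rintro T ⟨n, f, rfl⟩
        rw [hνS _ (cyl_measurableSet s r f), hρS, hcons f]
        by_cases hcf : compat s r f
        · by_cases hre : r e = s (f 0)
          · have hcompat : compat s r (Fin.cons e f) := by
              intro i
              refine Fin.cases ?_ ?_ i
              · simpa [Fin.cons_zero, Fin.cons_succ] using hre
              · intro j
                rw [← Fin.succ_castSucc, Fin.cons_succ, Fin.cons_succ]
                exact hcf j
            have hsub : cyl s r f ⊆ {x : PathSp s r | s (x.1 0) = r e} := by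
              intro x hx
              have h0 := hx 0
              show s (x.1 0) = r e
              rw [show ((0 : Fin (n + 1)) : ℕ) = 0 from rfl] at h0
              rw [h0, hre]
            rw [Set.inter_eq_self_of_subset_left hsub, hμ (n + 1) _ hcompat, hμ n f hcf]
            have hlast : (Fin.cons e f : Fin (n + 2) → E) (Fin.last (n + 1)) = f (Fin.last n) := by
              rw [← Fin.succ_last, Fin.cons_succ]
            rw [hlast]
            rw [div_eq_mul_inv, div_eq_mul_inv, ENNReal.inv_pow, ENNReal.inv_pow, pow_succ]
            ring
          · have hempty : cyl s r (Fin.cons e f) = ∅ := by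
              rw [Set.eq_empty_iff_forall_notMem]
              intro x hx
              apply hre
              have h0 := compat_of_mem_cyl hx 0
              simpa [Fin.castSucc_zero, Fin.cons_zero, Fin.cons_succ] using h0
            have hempty2 : cyl s r f ∩ {x : PathSp s r | s (x.1 0) = r e} = ∅ := by
              rw [Set.eq_empty_iff_forall_notMem]
              rintro x ⟨hx1, hx2⟩
              apply hre
              have h0 := hx1 0
              rw [show ((0 : Fin (n + 1)) : ℕ) = 0 from rfl] at h0
              rw [← hx2, h0]
            rw [hempty, hempty2]
            simp
        · have hempty : cyl s r f = ∅ := by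
            rw [Set.eq_empty_iff_forall_notMem]
            intro x hx
            exact hcf (compat_of_mem_cyl hx)
          have hempty' : cyl s r (Fin.cons e f) = ∅ := by
            rw [Set.eq_empty_iff_forall_notMem]
            intro x hx
            apply hcf
            intro i
            have h1 := compat_of_mem_cyl hx i.succ
            rw [← Fin.succ_castSucc, Fin.cons_succ, Fin.cons_succ] at h1
            exact h1
          rw [hempty, hempty', Set.empty_inter]
          simp
      · rw [hνS Set.univ MeasurableSet.univ, hρS]
        simp only [Set.preimage_univ, Set.univ_inter]
        rw [hCe e, hμ0 (r e), div_eq_mul_inv, mul_comm]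
    intro S hS
    rw [← hνS S hS, hνρ, hρS]
  -- decomposition of σ⁻¹ S over first edges
  have main : ∀ S : Set (PathSp s r), MeasurableSet S →
      μ (shiftMap s r ⁻¹' S)
        = lam⁻¹ * ∑' w : V,
            (({e : E | r e = w}.ncard : ℝ≥0∞)) * μ (S ∩ {x : PathSp s r | s (x.1 0) = w}) := by
    intro S hS
    have hdecomp : shiftMap s r ⁻¹' S
        = ⋃ e : E, (shiftMap s r ⁻¹' S ∩ cyl s r (fun _ : Fin 1 => e)) := by
      ext x
      simp only [Set.mem_iUnion, Set.mem_inter_iff]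
      constructor
      · intro hx
        refine ⟨x.1 0, hx, fun i => ?_⟩
        have hi : i = 0 := Fin.fin_one_eq_zero i
        subst hi
        rfl
      · rintro ⟨e, hx, _⟩; exact hx
    have hdisj : Pairwise (Function.onFun Disjoint
        fun e : E => shiftMap s r ⁻¹' S ∩ cyl s r (fun _ : Fin 1 => e)) := by
      intro e e' hee
      refine Set.disjoint_left.mpr ?_
      rintro x ⟨_, hx1⟩ ⟨_, hx2⟩
      exact hee ((hx1 0).symm.trans (hx2 0))
    rw [hdecomp, measure_iUnion hdisj
      (fun e => (hσ hS).inter (cyl_measurableSet s r _))]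
    have h1 : ∀ e : E, μ (shiftMap s r ⁻¹' S ∩ cyl s r (fun _ : Fin 1 => e))
        = lam⁻¹ * μ (S ∩ {x : PathSp s r | s (x.1 0) = r e}) := fun e => key e S hS
    calc ∑' e : E, μ (shiftMap s r ⁻¹' S ∩ cyl s r (fun _ : Fin 1 => e))
        = ∑' e : E, lam⁻¹ * μ (S ∩ {x : PathSp s r | s (x.1 0) = r e}) := tsum_congr h1
      _ = lam⁻¹ * ∑' e : E, μ (S ∩ {x : PathSp s r | s (x.1 0) = r e}) :=
          ENNReal.tsum_mul_left
      _ = lam⁻¹ * ∑' w : V, (({e : E | r e = w}.ncard : ℝ≥0∞))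
            * μ (S ∩ {x : PathSp s r | s (x.1 0) = w}) := by
          congr 1
          rw [← (Equiv.sigmaFiberEquiv r).tsum_eq
            (fun e : E => μ (S ∩ {x : PathSp s r | s (x.1 0) = r e}))]
          rw [ENNReal.tsum_sigma' (fun p : Σ w : V, {e : E // r e = w} =>
            μ (S ∩ {x : PathSp s r | s (x.1 0) = r ((Equiv.sigmaFiberEquiv r) p)}))]
          refine tsum_congr fun w => ?_
          have hconst : ∀ b : {e : E // r e = w},
              μ (S ∩ {x : PathSp s r | s (x.1 0) = r ((Equiv.sigmaFiberEquiv r) ⟨w, b⟩)})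
                = μ (S ∩ {x : PathSp s r | s (x.1 0) = w}) := by
            intro b
            simp [Equiv.sigmaFiberEquiv, b.2]
          rw [tsum_congr hconst]
          haveI F1 : Fintype ↑{e : E | r e = w} := (hfin w).fintype
          haveI F2 : Fintype {e : E // r e = w} := F1
          rw [tsum_fintype, Finset.sum_const, nsmul_eq_mul]
          congr 2
          rw [← Nat.card_coe_set_eq, Nat.card_eq_fintype_card]
          show Fintype.card {e : E // r e = w} = Fintype.card ↑{e : E | r e = w}
          exact Fintype.card_congr (Equiv.refl _)
  -- μ S as a sum over starting vertices
  have hSsum : ∀ S : Set (PathSp s r), MeasurableSet S →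
      μ S = ∑' w : V, μ (S ∩ {x : PathSp s r | s (x.1 0) = w}) := by
    intro S hS
    have hdecomp : S = ⋃ w : V, (S ∩ {x : PathSp s r | s (x.1 0) = w}) := by
      ext x
      simp only [Set.mem_iUnion, Set.mem_inter_iff, Set.mem_setOf_eq]
      constructor
      · intro hx; exact ⟨s (x.1 0), hx, rfl⟩
      · rintro ⟨w, hx, _⟩; exact hx
    have hdisj : Pairwise (Function.onFun Disjoint
        fun w : V => S ∩ {x : PathSp s r | s (x.1 0) = w}) := by
      intro w w' hww
      refine Set.disjoint_left.mpr ?_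
      rintro x ⟨_, hx1⟩ ⟨_, hx2⟩
      exact hww (hx1.symm.trans hx2)
    conv_lhs => rw [hdecomp]
    exact measure_iUnion hdisj fun w => hS.inter (measurable_start s r w)
  -- the bounds
  have bounds : ∀ S : Set (PathSp s r), MeasurableSet S →
      lam⁻¹ * μ S ≤ μ (shiftMap s r ⁻¹' S) ∧
      μ (shiftMap s r ⁻¹' S) ≤ (M : ℝ≥0∞) * lam⁻¹ * μ S := by
    intro S hS
    rw [main S hS, hSsum S hS]
    constructor
    · refine mul_le_mul_right (Summable.tsum_le_tsum (fun w => ?_) ENNReal.summable ENNReal.summable) _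
      have h1 : (1 : ℝ≥0∞) ≤ ({e : E | r e = w}.ncard : ℝ≥0∞) := by
        have : 0 < {e : E | r e = w}.ncard := by
          rw [Set.ncard_pos (hfin w)]
          obtain ⟨e, he⟩ := hr w
          exact ⟨e, he⟩
        exact_mod_cast this
      calc μ (S ∩ {x : PathSp s r | s (x.1 0) = w})
          = 1 * μ (S ∩ {x : PathSp s r | s (x.1 0) = w}) := (one_mul _).symm
        _ ≤ ({e : E | r e = w}.ncard : ℝ≥0∞) * μ (S ∩ {x : PathSp s r | s (x.1 0) = w}) :=
            mul_le_mul_left h1 _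
    · calc lam⁻¹ * ∑' w : V, (({e : E | r e = w}.ncard : ℝ≥0∞))
            * μ (S ∩ {x : PathSp s r | s (x.1 0) = w})
          ≤ lam⁻¹ * ∑' w : V, (M : ℝ≥0∞) * μ (S ∩ {x : PathSp s r | s (x.1 0) = w}) := by
            refine mul_le_mul_right (Summable.tsum_le_tsum (fun w => ?_) ENNReal.summable
              ENNReal.summable) _
            exact mul_le_mul_left (by exact_mod_cast hM w) _
        _ = (M : ℝ≥0∞) * lam⁻¹ * ∑' w : V, μ (S ∩ {x : PathSp s r | s (x.1 0) = w}) := by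
            rw [ENNReal.tsum_mul_left]
            ring
  refine ⟨bounds, fun S hS => ?_⟩
  obtain ⟨hlow, hhigh⟩ := bounds S hS
  constructor
  · intro h0
    rw [h0, mul_zero] at hhigh
    exact le_antisymm hhigh (zero_le)
  · intro h0
    rw [h0] at hlow
    have h1 : lam⁻¹ * μ S = 0 := le_antisymm hlow (zero_le)
    rcases mul_eq_zero.mp h1 with h | h
    · exact absurd h (ENNReal.inv_ne_zero.mpr hlam')
    · exact h
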